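/- arXiv:1711.09384 — 4 statements merged into one kernel-verified Lean document; each statement's English description precedes it below -/
import Mathlib

section
/- Let $x_1, \ldots, x_m \in [0,1]$ with $m \ge 1$, and define $E_i = \sum_{j=i}^{m} x_j \prod_{\ell=i}^{j-1}(1-x_\ell)$ for $1 \le i \le m$ (with the empty product equal to 1). Then $E_1 \le 1$. Moreover, if instead $E_i$ is defined by the recursion $E_m = x_m(1-x_m) \le 1/4$ and $E_i = (1-x_i)(x_i + E_{i+1})$ for $1 \le i < m$, then $E_1 < 1$. -/
/-- Expected connection cost before a facility opens: the closed-form sum is at most 1,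
and via the recursion `E m = x m (1 - x m)`, `E i = (1 - x i)(x i + E (i+1))`, we get `E 1 < 1`. -/
theorem stmt0 (m : ℕ) (hm : 1 ≤ m) (x : ℕ → ℝ)
    (hx : ∀ j, 1 ≤ j → j ≤ m → x j ∈ Set.Icc (0:ℝ) 1) :
    (∑ j ∈ Finset.Icc 1 m, x j * ∏ ℓ ∈ Finset.Ico 1 j, (1 - x ℓ)) ≤ 1 ∧
    (∀ E : ℕ → ℝ, E m = x m * (1 - x m) →
      (∀ i, 1 ≤ i → i < m → E i = (1 - x i) * (x i + E (i+1))) → E 1 < 1) := by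
  constructor
  · have key : ∀ n, (∑ j ∈ Finset.Icc 1 n, x j * ∏ ℓ ∈ Finset.Ico 1 j, (1 - x ℓ))
        = 1 - ∏ ℓ ∈ Finset.Icc 1 n, (1 - x ℓ) := by
      intro n
      induction n with
      | zero => simp
      | succ n ih =>
        rw [Finset.sum_Icc_succ_top (by omega), ih,
            Finset.prod_Icc_succ_top (by omega : 1 ≤ n + 1),
            show Finset.Ico 1 (n+1) = Finset.Icc 1 n from Finset.Ico_add_one_right_eq_Icc 1 n]
        ring
    rw [key]
    have hp : (0:ℝ) ≤ ∏ ℓ ∈ Finset.Icc 1 m, (1 - x ℓ) :=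
      Finset.prod_nonneg (fun ℓ hℓ => by
        have h := hx ℓ (Finset.mem_Icc.mp hℓ).1 (Finset.mem_Icc.mp hℓ).2
        linarith [h.2])
    linarith
  · intro E hEm hrec
    have key : ∀ d i, i + d = m → 1 ≤ i → E i < 1 := by
      intro d
      induction d with
      | zero =>
        intro i h hi
        have him : i = m := by omega
        subst him
        have h1 := hx i hi le_rfl
        rw [hEm]; nlinarith [h1.1, h1.2]
      | succ d ih =>
        intro i h hi
        have hlt : i < m := by omega
        have hE1 : E (i+1) < 1 := ih (i+1) (by omega) (by omega)
        have hxi := hx i hi (le_of_lt hlt)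
        rw [hrec i hi hlt]
        rcases eq_or_lt_of_le hxi.1 with h0 | h0
        · rw [← h0]; simpa using hE1
        · nlinarith [hxi.2, mul_nonneg (sub_nonneg.mpr hxi.2)
            (le_of_lt (sub_pos.mpr hE1)), mul_pos h0 h0]
    exact key (m-1) 1 (by omega) le_rfl
end

section
/- Let $A$ be a finite set with a linear order, with at least 2 elements, embedded in a metric space with distinct points, and let $\pi : A \to A$ be defined by $\pi(a) = \arg\min_{x \in A \setminus \{a\}} d(a,x)$, breaking ties by choosing the greatest such $x$ in the linear order. Then the functional graph of $\pi$ (directed edges $a \to \pi(a)$) contains no directed cycles of length greater than 2; equivalently, every periodic point of $\pi$ has period exactly 2. -/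
/-- The nearest-neighbor map with ties broken towards the greatest element in a linear
order has no directed cycles of length greater than 2: every periodic point has period 2. -/
theorem stmt3 {X : Type*} [MetricSpace X] [LinearOrder X] (A : Finset X)
    (hcard : 2 ≤ A.card) (π : X → X)
    (hmem : ∀ a ∈ A, π a ∈ A) (hne : ∀ a ∈ A, π a ≠ a)
    (hmin : ∀ a ∈ A, ∀ x ∈ A, x ≠ a → dist a (π a) ≤ dist a x)
    (htie : ∀ a ∈ A, ∀ x ∈ A, x ≠ a → dist a x = dist a (π a) → x ≤ π a) :
    ∀ a ∈ A, (∃ s, 1 ≤ s ∧ π^[s] a = a) → π (π a) = a := by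
  rintro a ha ⟨s, hs1, hcyc⟩
  have hmemIt : ∀ b ∈ A, ∀ n, π^[n] b ∈ A := by
    intro b hb n
    induction n with
    | zero => simpa
    | succ n ih => rw [Function.iterate_succ_apply']; exact hmem _ ih
  have hdist : ∀ b ∈ A, dist (π b) (π (π b)) ≤ dist b (π b) := by
    intro b hb
    have h1 := hmin (π b) (hmem b hb) b hb (Ne.symm (hne b hb))
    calc dist (π b) (π (π b)) ≤ dist (π b) b := h1
      _ = dist b (π b) := dist_comm _ _
  -- key lemma: periodic points satisfy b ≤ π (π b)
  have key : ∀ b ∈ A, π^[s] b = b → b ≤ π (π b) := by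
    intro b hb hcb
    set g : ℕ → ℝ := fun n => dist (π^[n] b) (π^[n+1] b) with hg
    have gstep : ∀ n, g (n+1) ≤ g n := by
      intro n
      have := hdist (π^[n] b) (hmemIt b hb n)
      simpa [hg, Function.iterate_succ_apply'] using this
    have gmono : Antitone g := antitone_nat_of_succ_le gstep
    have gs : g s = g 0 := by
      simp only [hg]
      rw [Function.iterate_succ_apply', hcb]
      simp
    have g10 : g 1 = g 0 := by
      have h1 : g 1 ≤ g 0 := gmono (by norm_num)
      have h2 : g s ≤ g 1 := gmono hs1
      linarith [gs ▸ h2]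
    have hd : dist (π b) b = dist (π b) (π (π b)) := by
      have : dist (π b) (π (π b)) = dist b (π b) := by
        simpa [hg, Function.iterate_succ_apply'] using g10
      rw [this, dist_comm]
    exact htie (π b) (hmem b hb) b hb (Ne.symm (hne b hb)) hd
  -- each point on the orbit is periodic
  have hper : ∀ n, π^[s] (π^[n] a) = π^[n] a := by
    intro n
    rw [← Function.iterate_add_apply, add_comm, Function.iterate_add_apply, hcyc]
  -- chain of inequalities
  set h : ℕ → X := fun n => π^[2*n] a with hh
  have hstep : ∀ n, h n ≤ h (n+1) := by
    intro n
    have hk := key (π^[2*n] a) (hmemIt a ha (2*n)) (hper (2*n))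
    have : π^[2*(n+1)] a = π (π (π^[2*n] a)) := by
      have : 2*(n+1) = (2*n + 1) + 1 := by ring
      rw [this, Function.iterate_succ_apply', Function.iterate_succ_apply']
    simpa [hh, this] using hk
  have hmono : Monotone h := monotone_nat_of_le_succ hstep
  have hs0 : h s = h 0 := by
    simp only [hh, two_mul, Function.iterate_add_apply, hcyc]
    simp
  have h1a : h 1 = h 0 := le_antisymm (hs0 ▸ hmono hs1) (hmono (Nat.zero_le 1))
  have : π^[2] a = a := by simpa [hh] using h1a
  simpa [Function.iterate_succ_apply'] using this
end

section
/- Define $\rho(x) = \log(1 + x^2)$ for $x \ge 0$ (the Cauchy estimator). Then for all real $a, b, c \ge 0$ with $c \le a + b$, we have $\rho(c) \le 2(\rho(a) + \rho(b))$. -/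
/-- The Cauchy estimator `ρ(x) = log(1 + x²)` satisfies the weak triangle inequality
with `β = 2`. -/
theorem stmt10 (a b c : ℝ) (ha : 0 ≤ a) (hb : 0 ≤ b) (hc : 0 ≤ c) (hab : c ≤ a + b) :
    Real.log (1 + c ^ 2) ≤ 2 * (Real.log (1 + a ^ 2) + Real.log (1 + b ^ 2)) := by
  have h1 : (0:ℝ) < 1 + c ^ 2 := by positivity
  have h2 : (0:ℝ) < 1 + a ^ 2 := by positivity
  have h3 : (0:ℝ) < 1 + b ^ 2 := by positivity
  have key : (1 + c ^ 2) ≤ ((1 + a ^ 2) * (1 + b ^ 2)) ^ 2 := by nlinarith [sq_nonneg (a*b), sq_nonneg (a-b), sq_nonneg (a+b), sq_nonneg (a*b*(a+b)), sq_nonneg (a^2*b^2), mul_nonneg ha hb, sq_nonneg c]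
  calc Real.log (1 + c ^ 2) ≤ Real.log (((1 + a ^ 2) * (1 + b ^ 2)) ^ 2) :=
        Real.log_le_log h1 key
    _ = 2 * (Real.log (1 + a ^ 2) + Real.log (1 + b ^ 2)) := by
        rw [Real.log_pow, Real.log_mul (ne_of_gt h2) (ne_of_gt h3)]; ring
end

section
/- Define $\rho(x) = 1 - (1-x^2)^3$ for $0 \le x < 1$ and $\rho(x) = 1$ for $x \ge 1$ (the Tukey estimator). Then for all real $a,b,c \ge 0$ with $c \le a+b$, we have $\rho(c) \le 2(\rho(a) + \rho(b))$. -/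
/-- The Tukey biweight estimator. -/
noncomputable def tukey (x : ℝ) : ℝ := if x < 1 then 1 - (1 - x ^ 2) ^ 3 else 1

lemma tukey_le_one {x : ℝ} (hx : 0 ≤ x) : tukey x ≤ 1 := by
  unfold tukey
  split
  · next h =>
    have h1 : 0 ≤ 1 - x ^ 2 := by nlinarith
    nlinarith [pow_nonneg h1 3]
  · exact le_rfl

lemma tukey_nonneg {x : ℝ} (hx : 0 ≤ x) : 0 ≤ tukey x := by
  unfold tukey
  split
  · next h =>
    have h1 : 0 ≤ 1 - x ^ 2 := by nlinarith
    have h2 : 1 - x ^ 2 ≤ 1 := by nlinarith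
    nlinarith [mul_nonneg (mul_nonneg h1 h1) h1, sq_nonneg (1 - x^2),
      mul_nonneg (mul_nonneg (sub_nonneg.2 h2) h1) h1, mul_nonneg (sub_nonneg.2 h2) h1]
  · norm_num

lemma tukey_half {x : ℝ} (hx : (1:ℝ)/2 ≤ x) : 37/64 ≤ tukey x := by
  unfold tukey
  split
  · next h =>
    have h1 : 0 ≤ 1 - x ^ 2 := by nlinarith
    have h2 : 1 - x ^ 2 ≤ 3/4 := by nlinarith
    nlinarith [mul_nonneg (mul_nonneg (sub_nonneg.2 h2) h1) h1,
      mul_nonneg (sub_nonneg.2 h2) h1, sq_nonneg (1 - x^2)]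
  · norm_num

/-- The Tukey estimator satisfies the weak triangle inequality with `β = 2`. -/
theorem stmt11 (a b c : ℝ) (ha : 0 ≤ a) (hb : 0 ≤ b) (hc : 0 ≤ c) (hab : c ≤ a + b) :
    tukey c ≤ 2 * (tukey a + tukey b) := by
  by_cases hah : (1:ℝ)/2 ≤ a
  · have := tukey_half hah
    have := tukey_nonneg hb
    have := tukey_le_one hc
    linarith
  by_cases hbh : (1:ℝ)/2 ≤ b
  · have := tukey_half hbh
    have := tukey_nonneg ha
    have := tukey_le_one hc
    linarith
  push_neg at hah hbh
  have hc1 : c < 1 := by linarith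
  have ha1 : a < 1 := by linarith
  have hb1 : b < 1 := by linarith
  have hta : tukey a = 1 - (1 - a ^ 2) ^ 3 := by unfold tukey; rw [if_pos ha1]
  have htb : tukey b = 1 - (1 - b ^ 2) ^ 3 := by unfold tukey; rw [if_pos hb1]
  have htc : tukey c = 1 - (1 - c ^ 2) ^ 3 := by unfold tukey; rw [if_pos hc1]
  rw [hta, htb, htc]
  have hs1 : a + b < 1 := by linarith
  have hmono : 1 - (1 - c ^ 2) ^ 3 ≤ 1 - (1 - (a + b) ^ 2) ^ 3 := by
    have hsc : 0 ≤ (a + b) ^ 2 - c ^ 2 := by nlinarith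
    have hg : 0 ≤ (1 - (a+b)^2)^2 + (1 - c^2)^2 + (1 - (a+b)^2) * (1 - c^2) := by
      nlinarith [sq_nonneg (1 - (a+b)^2), sq_nonneg (1 - c^2)]
    nlinarith [mul_nonneg hsc hg]
  have hkey : 1 - (1 - (a + b) ^ 2) ^ 3 ≤ 2 * ((1 - (1 - a ^ 2) ^ 3) + (1 - (1 - b ^ 2) ^ 3)) := by
    have hp2 : (a + b) ^ 2 ≤ 1 := by nlinarith
    have t1 : 0 ≤ (a - b)^2 * (1 - (a+b)^2)^2 := mul_nonneg (sq_nonneg _) (sq_nonneg _)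
    have t2 : 0 ≤ (a - b)^2 * ((a+b)^2 + 4*(a*b)) := by positivity
    have t3 : 0 ≤ (a - b)^2 * (a*b)^2 := mul_nonneg (sq_nonneg _) (sq_nonneg _)
    have t4 : 0 ≤ (1 - (a+b)^2) * (a+b)^4 :=
      mul_nonneg (by linarith) (pow_nonneg (add_nonneg ha hb) 4)
    have t5 : 0 ≤ (a+b)^2 * (a*b)^2 := mul_nonneg (sq_nonneg _) (sq_nonneg _)
    nlinarith [t1, t2, t3, t4, t5, sq_nonneg (a+b), sq_nonneg (a-b)]
  linarith
end
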